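/- Let K, L ∈ 𝒦ⁿ, let i be an integer with 0 ≤ i < n, and let p ≥ 1 be a real number. Then A_i(K +_p L)^{−p/(n−i)} ≥ A_i(K)^{−p/(n−i)} + A_i(L)^{−p/(n−i)}, with equality if and only if K and L have similar width. (This is the special case φ_1(t) = φ_2(t) = t^{−p} of the Orlicz width Brunn–Minkowski inequality.) -/

import Mathlib

open MeasureTheory Metric Filter Set
open scoped RealInnerProductSpace ENNReal

noncomputable section

abbrev Euc (n : ℕ) := EuclideanSpace ℝ (Fin n)

/-- Support function `h(K,x) = sup {⟨x,y⟩ : y ∈ K}`. -/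
def suppFn {n : ℕ} (K : Set (Euc n)) (x : Euc n) : ℝ :=
  sSup ((fun y => ⟪x, y⟫) '' K)

/-- Half width of `K` in direction `u`: `b(K,u) = (h(K,u)+h(K,-u))/2`. -/
def halfWidth {n : ℕ} (K : Set (Euc n)) (u : Euc n) : ℝ :=
  (suppFn K u + suppFn K (-u)) / 2

/-- A convex body containing the origin in its interior. -/
def IsConvexBody {n : ℕ} (K : Set (Euc n)) : Prop :=
  IsCompact K ∧ Convex ℝ K ∧ (0 : Euc n) ∈ interior K

/-- Spherical Lebesgue measure on the unit sphere. -/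
def sphMeasure (n : ℕ) : Measure (sphere (0 : Euc n) 1) :=
  (volume : Measure (Euc n)).toSphere

/-- Width integral `A_i(K) = (1/n) ∫_{S^{n-1}} b(K,u)^{n-i} dS(u)`. -/
def widthIntegral (n i : ℕ) (K : Set (Euc n)) : ℝ :=
  (1 / (n : ℝ)) * ∫ u : sphere (0 : Euc n) 1,
    halfWidth K (u : Euc n) ^ ((n : ℝ) - i) ∂(sphMeasure n)

/-- `K` and `L` have similar width: `b(L,·) = λ b(K,·)` on the sphere for some `λ > 0`. -/
def SimilarWidth {n : ℕ} (K L : Set (Euc n)) : Prop :=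
  ∃ lam : ℝ, 0 < lam ∧ ∀ u : Euc n, ‖u‖ = 1 → halfWidth L u = lam * halfWidth K u

/-- The class `Φ`: convex, strictly decreasing `φ : (0,∞) → (0,∞)` with
`φ(0⁺)=∞`, `φ(∞)=0`, `φ(1)=1`. -/
structure IsOrliczPhi (φ : ℝ → ℝ) : Prop where
  convexOn : ConvexOn ℝ (Set.Ioi (0 : ℝ)) φ
  strictAntiOn : StrictAntiOn φ (Set.Ioi (0 : ℝ))
  pos : ∀ t : ℝ, 0 < t → 0 < φ t
  tendsto_zero : Filter.Tendsto φ (nhdsWithin 0 (Set.Ioi 0)) Filter.atTop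
  tendsto_atTop : Filter.Tendsto φ Filter.atTop (nhds 0)
  one : φ 1 = 1

/-- The half-width function of the `L_p` width addition `K +_p L`:
`b(K +_p L, u) = (b(K,u)^{-p} + b(L,u)^{-p})^{-1/p}`. -/
def lpAddHalfWidth {n : ℕ} (p : ℝ) (K L : Set (Euc n)) (u : Euc n) : ℝ :=
  (halfWidth K u ^ (-p) + halfWidth L u ^ (-p)) ^ (-1 / p)

/-- `A_i(K +_p L) = (1/n) ∫ b(K +_p L, u)^{n-i} dS(u)`. -/
def lpAddWidthIntegral (n i : ℕ) (p : ℝ) (K L : Set (Euc n)) : ℝ :=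
  (1 / (n : ℝ)) * ∫ u : sphere (0 : Euc n) 1,
    lpAddHalfWidth p K L (u : Euc n) ^ ((n : ℝ) - i) ∂(sphMeasure n)


set_option linter.unusedSectionVars false

section Aux


lemma amgm_lt {a b l : ℝ} (ha : 0 < a) (hb : 0 < b) (hl : 0 < l) (hl1 : l < 1)
    (hab : a ≠ b) : a ^ l * b ^ (1 - l) < l * a + (1 - l) * b := by
  have hl2 : (0:ℝ) < 1 - l := by linarith
  have h := strictConcaveOn_log_Ioi.2 (mem_Ioi.2 ha) (mem_Ioi.2 hb) hab hl hl2
    (by ring : l + (1 - l) = 1)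
  have hx : 0 < l * a + (1 - l) * b := by positivity
  have key : a ^ l * b ^ (1 - l) = Real.exp (l * Real.log a + (1 - l) * Real.log b) := by
    rw [Real.exp_add, Real.rpow_def_of_pos ha, Real.rpow_def_of_pos hb, mul_comm (Real.log a),
      mul_comm (Real.log b)]
  rw [key]
  calc Real.exp (l * Real.log a + (1 - l) * Real.log b)
      < Real.exp (Real.log (l * a + (1 - l) * b)) := Real.exp_lt_exp.2 (by simpa [smul_eq_mul] using h)
    _ = l * a + (1 - l) * b := Real.exp_log hx

lemma amgm_le {a b l : ℝ} (ha : 0 < a) (hb : 0 < b) (hl : 0 < l) (hl1 : l < 1) :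
    a ^ l * b ^ (1 - l) ≤ l * a + (1 - l) * b := by
  rcases eq_or_ne a b with rfl | hab
  · rw [← Real.rpow_add ha]; ring_nf; rw [Real.rpow_one]
  · exact (amgm_lt ha hb hl hl1 hab).le

variable {X : Type*} [MeasurableSpace X] [TopologicalSpace X] [BorelSpace X]
  [CompactSpace X] [T2Space X] {μ : Measure X} [IsFiniteMeasure μ]

lemma cont_int {f : X → ℝ} (hf : Continuous f) : Integrable f μ :=
  hf.integrable_of_hasCompactSupport (HasCompactSupport.of_compactSpace f)

lemma int_pos [Nonempty X] [μ.IsOpenPosMeasure] {f : X → ℝ} (hf : Continuous f)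
    (h0 : ∀ x, 0 < f x) : 0 < ∫ x, f x ∂μ := by
  obtain ⟨x0, -, hx0⟩ := isCompact_univ.exists_isMinOn univ_nonempty hf.continuousOn
  have hμ : 0 < (μ univ).toReal := by
    refine ENNReal.toReal_pos ?_ (measure_ne_top μ _)
    exact (isOpen_univ.measure_pos μ univ_nonempty).ne'
  calc (0:ℝ) < (μ univ).toReal * f x0 := mul_pos hμ (h0 x0)
    _ = ∫ _x, f x0 ∂μ := by rw [integral_const, smul_eq_mul]; rfl
    _ ≤ ∫ x, f x ∂μ := integral_mono (integrable_const _) (cont_int hf)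
        (fun x => hx0 (mem_univ x))


lemma hoelder [Nonempty X] [μ.IsOpenPosMeasure] {u v : X → ℝ} (hu : Continuous u)
    (hv : Continuous v) (hu0 : ∀ x, 0 < u x) (hv0 : ∀ x, 0 < v x) {l : ℝ}
    (hl : 0 < l) (hl1 : l < 1) :
    (∫ x, u x ^ l * v x ^ (1 - l) ∂μ) ≤ (∫ x, u x ∂μ) ^ l * (∫ x, v x ∂μ) ^ (1 - l) ∧
    ((∫ x, u x ^ l * v x ^ (1 - l) ∂μ) = (∫ x, u x ∂μ) ^ l * (∫ x, v x ∂μ) ^ (1 - l) ↔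
      ∀ x, (∫ x, v x ∂μ) * u x = (∫ x, u x ∂μ) * v x) := by
  set W := ∫ x, u x ∂μ with hW
  set Z := ∫ x, v x ∂μ with hZ
  have hWpos : 0 < W := int_pos hu hu0
  have hZpos : 0 < Z := int_pos hv hv0
  set D := W ^ l * Z ^ (1 - l) with hD
  have hDpos : 0 < D := by positivity
  set φ : X → ℝ := fun x => l * (u x / W) + (1 - l) * (v x / Z)
      - (u x / W) ^ l * (v x / Z) ^ (1 - l) with hφ
  have hφx : ∀ x, φ x = l * (u x / W) + (1 - l) * (v x / Z)
      - (u x / W) ^ l * (v x / Z) ^ (1 - l) := fun x => rfl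
  have huW : ∀ x, 0 < u x / W := fun x => div_pos (hu0 x) hWpos
  have hvZ : ∀ x, 0 < v x / Z := fun x => div_pos (hv0 x) hZpos
  have hφc : Continuous φ := by
    apply Continuous.sub
    · exact (continuous_const.mul (hu.div_const W)).add
        (continuous_const.mul (hv.div_const Z))
    · exact ((hu.div_const W).rpow_const (fun x => Or.inl (huW x).ne')).mul
        ((hv.div_const Z).rpow_const (fun x => Or.inl (hvZ x).ne'))
  have hφ0 : ∀ x, 0 ≤ φ x := fun x =>
    sub_nonneg.2 (amgm_le (huW x) (hvZ x) hl hl1)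
  set I := ∫ x, u x ^ l * v x ^ (1 - l) ∂μ with hI
  have key : (∫ x, φ x ∂μ) = 1 - I / D := by
    have h1 : Integrable (fun x => l * (u x / W) + (1 - l) * (v x / Z)) μ :=
      cont_int ((continuous_const.mul (hu.div_const W)).add
        (continuous_const.mul (hv.div_const Z)))
    have h2 : Integrable (fun x => (u x / W) ^ l * (v x / Z) ^ (1 - l)) μ :=
      cont_int (((hu.div_const W).rpow_const (fun x => Or.inl (huW x).ne')).mul
        ((hv.div_const Z).rpow_const (fun x => Or.inl (hvZ x).ne')))
    have e0 : (∫ x, φ x ∂μ) = (∫ x, (l * (u x / W) + (1 - l) * (v x / Z)) ∂μ)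
        - ∫ x, (u x / W) ^ l * (v x / Z) ^ (1 - l) ∂μ := by
      rw [← integral_sub h1 h2]
    have e1 : (∫ x, (l * (u x / W) + (1 - l) * (v x / Z)) ∂μ) = 1 := by
      rw [integral_add (by exact (cont_int (hu.div_const W)).const_mul _)
        (by exact (cont_int (hv.div_const Z)).const_mul _),
        integral_const_mul, integral_const_mul, integral_div, integral_div,
        ← hW, ← hZ, div_self hWpos.ne', div_self hZpos.ne']
      ring
    have e2 : (∫ x, (u x / W) ^ l * (v x / Z) ^ (1 - l) ∂μ) = I / D := by
      have hpt : ∀ x, (u x / W) ^ l * (v x / Z) ^ (1 - l)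
          = (u x ^ l * v x ^ (1 - l)) / D := by
        intro x
        rw [Real.div_rpow (hu0 x).le hWpos.le, Real.div_rpow (hv0 x).le hZpos.le, hD]
        rw [div_mul_div_comm]
      rw [integral_congr_ae (Filter.Eventually.of_forall hpt), integral_div]
    rw [e0, e1, e2]
  have hzero_iff : (∫ x, φ x ∂μ) = 0 ↔ ∀ x, φ x = 0 := by
    rw [integral_eq_zero_iff_of_nonneg hφ0 (cont_int hφc)]
    constructor
    · intro h x
      have h2 : φ = (fun _ => (0:ℝ)) := (Continuous.ae_eq_iff_eq μ hφc continuous_const).1 h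
      exact congrFun h2 x
    · intro h
      exact Filter.Eventually.of_forall h
  have hptwise : (∀ x, φ x = 0) ↔ ∀ x, Z * u x = W * v x := by
    constructor
    · intro h x
      have h2 := h x
      rw [hφx] at h2
      have hab : u x / W = v x / Z := by
        by_contra hne
        exact (amgm_lt (huW x) (hvZ x) hl hl1 hne).ne (by linarith)
      rw [div_eq_div_iff hWpos.ne' hZpos.ne'] at hab
      linarith [hab]
    · intro h x
      have hab : u x / W = v x / Z := by
        rw [div_eq_div_iff hWpos.ne' hZpos.ne']
        linarith [h x]
      rw [hφx, hab, ← Real.rpow_add (hvZ x)]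
      ring_nf
      rw [Real.rpow_one]
      ring
  have hint0 : 0 ≤ ∫ x, φ x ∂μ := integral_nonneg hφ0
  constructor
  · rw [key] at hint0
    have h3 : I / D ≤ 1 := by linarith
    calc I = (I / D) * D := by field_simp
      _ ≤ 1 * D := by nlinarith
      _ = D := one_mul D
  · rw [← hptwise, ← hzero_iff, key]
    constructor
    · intro h
      rw [h, div_self hDpos.ne']; ring
    · intro h
      have h4 : I / D = 1 := by linarith
      calc I = (I / D) * D := by field_simp
        _ = D := by rw [h4, one_mul]

lemma revmink [Nonempty X] [μ.IsOpenPosMeasure] {F G : X → ℝ} (hFc : Continuous F)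
    (hGc : Continuous G) (hF0 : ∀ x, 0 < F x) (hG0 : ∀ x, 0 < G x) {s : ℝ} (hs : 0 < s) :
    (∫ x, F x ^ (-s) ∂μ) ^ (-1/s) + (∫ x, G x ^ (-s) ∂μ) ^ (-1/s)
      ≤ (∫ x, (F x + G x) ^ (-s) ∂μ) ^ (-1/s) ∧
    ((∫ x, (F x + G x) ^ (-s) ∂μ) ^ (-1/s)
        = (∫ x, F x ^ (-s) ∂μ) ^ (-1/s) + (∫ x, G x ^ (-s) ∂μ) ^ (-1/s) ↔
      ∃ c : ℝ, 0 < c ∧ ∀ x, G x = c * F x) := by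
  have hs1 : (0:ℝ) < s + 1 := by linarith
  set H : X → ℝ := fun x => F x + G x with hH
  have hH0 : ∀ x, 0 < H x := fun x => add_pos (hF0 x) (hG0 x)
  have hHc : Continuous H := hFc.add hGc
  set l : ℝ := s / (s + 1) with hl_def
  have hl : 0 < l := div_pos hs hs1
  have hl1 : l < 1 := (div_lt_one hs1).2 (by linarith)
  have h1l : 1 - l = 1 / (s + 1) := by rw [hl_def]; field_simp; ring
  -- the functions in the two Hölder applications
  set uF : X → ℝ := fun x => F x * H x ^ (-(s+1)) with huF
  set uG : X → ℝ := fun x => G x * H x ^ (-(s+1)) with huG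
  set vF : X → ℝ := fun x => F x ^ (-s) with hvF
  set vG : X → ℝ := fun x => G x ^ (-s) with hvG
  have hHpow : Continuous fun x => H x ^ (-(s+1)) :=
    hHc.rpow_const fun x => Or.inl (hH0 x).ne'
  have huFc : Continuous uF := hFc.mul hHpow
  have huGc : Continuous uG := hGc.mul hHpow
  have hvFc : Continuous vF := hFc.rpow_const fun x => Or.inl (hF0 x).ne'
  have hvGc : Continuous vG := hGc.rpow_const fun x => Or.inl (hG0 x).ne'
  have huF0 : ∀ x, 0 < uF x := fun x => mul_pos (hF0 x) (Real.rpow_pos_of_pos (hH0 x) _)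
  have huG0 : ∀ x, 0 < uG x := fun x => mul_pos (hG0 x) (Real.rpow_pos_of_pos (hH0 x) _)
  have hvF0 : ∀ x, 0 < vF x := fun x => Real.rpow_pos_of_pos (hF0 x) _
  have hvG0 : ∀ x, 0 < vG x := fun x => Real.rpow_pos_of_pos (hG0 x) _
  set IH := ∫ x, H x ^ (-s) ∂μ with hIH
  set IF := ∫ x, vF x ∂μ with hIF
  set IG := ∫ x, vG x ∂μ with hIG
  set JF := ∫ x, uF x ∂μ with hJF
  set JG := ∫ x, uG x ∂μ with hJG
  have hIHpos : 0 < IH := int_pos (hHc.rpow_const fun x => Or.inl (hH0 x).ne')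
    (fun x => Real.rpow_pos_of_pos (hH0 x) _)
  have hIFpos : 0 < IF := int_pos hvFc hvF0
  have hIGpos : 0 < IG := int_pos hvGc hvG0
  have hJFpos : 0 < JF := int_pos huFc huF0
  have hJGpos : 0 < JG := int_pos huGc huG0
  -- exponent identities
  have hexp1 : -(s+1) * l = -s := by rw [hl_def]; field_simp
  have hexp2 : l + (-s) * (1 - l) = 0 := by rw [hl_def]; field_simp; ring
  -- pointwise identity for Hölder
  have hptF : ∀ x, uF x ^ l * vF x ^ (1 - l) = H x ^ (-s) := by
    intro x
    rw [huF, hvF]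
    rw [Real.mul_rpow (hF0 x).le (Real.rpow_pos_of_pos (hH0 x) _).le,
      ← Real.rpow_mul (hH0 x).le, ← Real.rpow_mul (hF0 x).le, hexp1,
      mul_comm (F x ^ l) _, mul_assoc, ← Real.rpow_add (hF0 x), hexp2,
      Real.rpow_zero, mul_one]
  have hptG : ∀ x, uG x ^ l * vG x ^ (1 - l) = H x ^ (-s) := by
    intro x
    rw [huG, hvG]
    rw [Real.mul_rpow (hG0 x).le (Real.rpow_pos_of_pos (hH0 x) _).le,
      ← Real.rpow_mul (hH0 x).le, ← Real.rpow_mul (hG0 x).le, hexp1,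
      mul_comm (G x ^ l) _, mul_assoc, ← Real.rpow_add (hG0 x), hexp2,
      Real.rpow_zero, mul_one]
  have hHF := hoelder (μ := μ) huFc hvFc huF0 hvF0 hl hl1
  have hHG := hoelder (μ := μ) huGc hvGc huG0 hvG0 hl hl1
  have hintF : (∫ x, uF x ^ l * vF x ^ (1 - l) ∂μ) = IH :=
    integral_congr_ae (Filter.Eventually.of_forall hptF)
  have hintG : (∫ x, uG x ^ l * vG x ^ (1 - l) ∂μ) = IH :=
    integral_congr_ae (Filter.Eventually.of_forall hptG)
  rw [hintF] at hHF
  rw [hintG] at hHG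
  -- J_F + J_G = IH
  have hsum : JF + JG = IH := by
    rw [hJF, hJG, ← integral_add (cont_int huFc) (cont_int huGc)]
    apply integral_congr_ae (Filter.Eventually.of_forall _)
    intro x
    have : uF x + uG x = H x * H x ^ (-(s+1)) := by
      rw [huF, huG]; ring
    rw [this, ← Real.rpow_one_add' (hH0 x).le (by intro h; linarith [h]),
      show (1 + -(s+1)) = -s by ring]
  -- bounds
  have hinvl : l * ((s+1)/s) = 1 := by rw [hl_def]; field_simp
  have bound : ∀ J Iv : ℝ, 0 < J → 0 < Iv → IH ≤ J ^ l * Iv ^ (1-l) →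
      IH ^ ((s+1)/s) * Iv ^ (-1/s) ≤ J := by
    intro J Iv hJ hIv hLe
    have h5 : IH ^ ((s+1)/s) ≤ J * Iv ^ ((1-l) * ((s+1)/s)) := by
      have h6 := Real.rpow_le_rpow hIHpos.le hLe (by positivity : (0:ℝ) ≤ (s+1)/s)
      rwa [Real.mul_rpow (by positivity) (by positivity),
        ← Real.rpow_mul hJ.le, hinvl, Real.rpow_one, ← Real.rpow_mul (by positivity)] at h6
    have h7 := mul_le_mul_of_nonneg_right h5
      (le_of_lt (Real.rpow_pos_of_pos hIv (-(1-l) * ((s+1)/s))))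
    rw [mul_assoc, ← Real.rpow_add hIv] at h7
    have h8 : (1-l) * ((s+1)/s) + -(1-l) * ((s+1)/s) = 0 := by ring
    rw [h8, Real.rpow_zero, mul_one] at h7
    have h9 : -(1-l) * ((s+1)/s) = -1/s := by rw [h1l]; field_simp
    rwa [h9] at h7
  rw [← hJF, ← hIF] at hHF
  rw [← hJG, ← hIG] at hHG
  have boundF : IH ^ ((s+1)/s) * IF ^ (-1/s) ≤ JF := bound JF IF hJFpos hIFpos hHF.1
  have boundG : IH ^ ((s+1)/s) * IG ^ (-1/s) ≤ JG := bound JG IG hJGpos hIGpos hHG.1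
  have hApos : 0 < IH ^ ((s+1)/s) := Real.rpow_pos_of_pos hIHpos _
  have hpow : IH ^ ((s+1)/s) * IH ^ (-1/s) = IH := by
    rw [← Real.rpow_add hIHpos, show (s+1)/s + -1/s = 1 by field_simp; ring, Real.rpow_one]
  have main_le : IF ^ (-1/s) + IG ^ (-1/s) ≤ IH ^ (-1/s) := by
    have hT : IH ^ ((s+1)/s) * (IF ^ (-1/s) + IG ^ (-1/s)) ≤ IH ^ ((s+1)/s) * IH ^ (-1/s) := by
      rw [hpow, mul_add]; linarith
    exact le_of_mul_le_mul_left hT hApos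
  constructor
  · exact main_le
  show IH ^ (-1/s) = IF ^ (-1/s) + IG ^ (-1/s) ↔ _
  constructor
  · intro heq
    have h1 : IH ^ ((s+1)/s) * IF ^ (-1/s) + IH ^ ((s+1)/s) * IG ^ (-1/s) = IH := by
      rw [← mul_add, ← heq, hpow]
    have hJFeq : JF = IH ^ ((s+1)/s) * IF ^ (-1/s) := by linarith
    have hHFeq : IH = JF ^ l * IF ^ (1 - l) := by
      rw [hJFeq, Real.mul_rpow hApos.le (Real.rpow_pos_of_pos hIFpos _).le,
        ← Real.rpow_mul hIHpos.le, ← Real.rpow_mul hIFpos.le]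
      have e1 : (s+1)/s * l = 1 := by rw [hl_def]; field_simp
      have e2 : -1/s * l + (1 - l) = 0 := by rw [hl_def]; field_simp; ring
      rw [mul_assoc, ← Real.rpow_add hIFpos, e1, e2, Real.rpow_one, Real.rpow_zero, mul_one]
    have hpt := hHF.2.1 hHFeq
    set k := JF / IF with hk
    have hkpos : 0 < k := div_pos hJFpos hIFpos
    set d := k ^ (-1/(s+1)) with hd
    have hdpos : 0 < d := Real.rpow_pos_of_pos hkpos _
    have hprop : ∀ x, G x = (d - 1) * F x := by
      intro x
      have h := hpt x
      rw [huF, hvF] at h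
      simp only at h
      have e3 : F x ^ (-s) = F x ^ (-(s+1)) * F x := by
        nth_rewrite 3 [← Real.rpow_one (F x)]
        rw [← Real.rpow_add (hF0 x)]
        norm_num
      rw [e3] at h
      have h' : (IF * H x ^ (-(s+1))) * F x = (JF * F x ^ (-(s+1))) * F x := by
        linear_combination h
      have h'' := mul_right_cancel₀ (hF0 x).ne' h'
      have e4 : H x ^ (-(s+1)) = k * F x ^ (-(s+1)) := by
        rw [hk, div_mul_eq_mul_div, eq_div_iff hIFpos.ne']
        linarith [h'']
      have h6 := congrArg (fun t : ℝ => t ^ (-1/(s+1))) e4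
      rw [← Real.rpow_mul (hH0 x).le,
        show -(s+1) * (-1/(s+1)) = 1 by field_simp,
        Real.rpow_one,
        Real.mul_rpow hkpos.le (Real.rpow_pos_of_pos (hF0 x) _).le,
        ← Real.rpow_mul (hF0 x).le,
        show -(s+1) * (-1/(s+1)) = 1 by field_simp,
        Real.rpow_one, ← hd] at h6
      have hHx : H x = F x + G x := rfl
      rw [hHx] at h6
      linarith
    have hx0 := hprop (Classical.arbitrary X)
    have hcpos : 0 < d - 1 := by
      nlinarith [hG0 (Classical.arbitrary X), hF0 (Classical.arbitrary X)]
    exact ⟨d - 1, hcpos, hprop⟩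
  · rintro ⟨c, hc, hGF⟩
    have h1c : (0:ℝ) < 1 + c := by linarith
    have hIGc : IG = c ^ (-s) * IF := by
      rw [hIG, hIF, ← integral_const_mul]
      apply integral_congr_ae (Filter.Eventually.of_forall _)
      intro x
      rw [hvG, hvF]
      simp only
      rw [hGF x, Real.mul_rpow hc.le (hF0 x).le]
    have hIHc : IH = (1 + c) ^ (-s) * IF := by
      rw [hIH, hIF, ← integral_const_mul]
      apply integral_congr_ae (Filter.Eventually.of_forall _)
      intro x
      have hHx : H x = (1 + c) * F x := by
        have : H x = F x + G x := rfl
        rw [this, hGF x]; ring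
      rw [hvF]
      simp only
      rw [hHx, Real.mul_rpow h1c.le (hF0 x).le]
    rw [hIHc, hIGc, Real.mul_rpow (by positivity) hIFpos.le,
      Real.mul_rpow (by positivity) hIFpos.le,
      ← Real.rpow_mul h1c.le, ← Real.rpow_mul hc.le,
      show -s * (-1/s) = 1 by field_simp, Real.rpow_one, Real.rpow_one]
    ring

section geom
variable {n : ℕ} {K : Set (Euc n)}

lemma suppFn_bddAbove (hK : IsCompact K) (x : Euc n) :
    BddAbove ((fun y => ⟪x, y⟫) '' K) :=
  (hK.image (continuous_const.inner continuous_id)).bddAbove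

lemma le_suppFn (hK : IsCompact K) {y : Euc n} (hy : y ∈ K) (x : Euc n) :
    ⟪x, y⟫ ≤ suppFn K x :=
  le_csSup (suppFn_bddAbove hK x) (mem_image_of_mem _ hy)

lemma suppFn_le (hne : K.Nonempty) {x : Euc n} {c : ℝ}
    (h : ∀ y ∈ K, ⟪x, y⟫ ≤ c) : suppFn K x ≤ c :=
  csSup_le (hne.image _) (by rintro a ⟨y, hy, rfl⟩; exact h y hy)

lemma suppFn_continuous (hK : IsCompact K) (hne : K.Nonempty) :
    Continuous (suppFn K) := by
  obtain ⟨R, hR⟩ := hK.isBounded.exists_norm_le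
  have key : ∀ x z : Euc n, suppFn K x ≤ suppFn K z + R * ‖x - z‖ := by
    intro x z
    apply suppFn_le hne
    intro y hy
    have h1 : ⟪x, y⟫ = ⟪z, y⟫ + ⟪x - z, y⟫ := by
      rw [← inner_add_left]; congr 1; abel
    have h2 : ⟪x - z, y⟫ ≤ ‖x - z‖ * ‖y‖ := real_inner_le_norm _ _
    have h3 : ‖x - z‖ * ‖y‖ ≤ ‖x - z‖ * R :=
      mul_le_mul_of_nonneg_left (hR y hy) (norm_nonneg _)
    have h4 := le_suppFn hK hy z
    rw [h1]
    nlinarith [norm_nonneg (x - z)]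
  have hR0 : 0 ≤ R := le_trans (norm_nonneg _) (hR _ hne.some_mem)
  apply (LipschitzWith.of_dist_le_mul (K := R.toNNReal) ?_).continuous
  intro x z
  rw [Real.dist_eq, dist_eq_norm, Real.coe_toNNReal R hR0]
  have k1 := key x z
  have k2 := key z x
  rw [abs_le]
  have hnn : ‖z - x‖ = ‖x - z‖ := by rw [← norm_neg]; congr 1; abel
  rw [hnn] at k2
  constructor
  · linarith
  · linarith

lemma halfWidth_continuous (hK : IsCompact K) (hne : K.Nonempty) :
    Continuous (halfWidth K) := by
  have h := suppFn_continuous hK hne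
  exact ((h.add (h.comp continuous_neg)).div_const 2)

lemma halfWidth_pos (hK : IsConvexBody K) {u : Euc n} (hu : ‖u‖ = 1) :
    0 < halfWidth K u := by
  obtain ⟨hKc, -, hK0⟩ := hK
  obtain ⟨ε, hε, hball⟩ := Metric.mem_nhds_iff.1 (mem_interior_iff_mem_nhds.1 hK0)
  have hmem : ∀ v : Euc n, ‖v‖ = 1 → (ε/2) • v ∈ K := by
    intro v hv
    apply hball
    rw [mem_ball_zero_iff, norm_smul, hv]
    simp only [mul_one]
    rw [Real.norm_eq_abs, abs_of_pos (by linarith)]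
    linarith
  have h1 : (ε/2 : ℝ) ≤ suppFn K u := by
    have := le_suppFn hKc (hmem u hu) u
    rwa [real_inner_smul_right, real_inner_self_eq_norm_sq, hu, one_pow, mul_one] at this
  have h2 : (ε/2 : ℝ) ≤ suppFn K (-u) := by
    have hu' : ‖-u‖ = 1 := by rwa [norm_neg]
    have := le_suppFn hKc (hmem (-u) hu') (-u)
    rwa [real_inner_smul_right, real_inner_self_eq_norm_sq, hu', one_pow, mul_one] at this
  rw [halfWidth]
  linarith

end geom

open scoped Pointwise in
lemma sphMeasure_openPos (n : ℕ) (hn : 1 ≤ n) :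
    (sphMeasure n).IsOpenPosMeasure := by
  constructor
  intro U hU hUne
  rw [sphMeasure]
  have happ := Measure.toSphere_apply' (μ := (volume : Measure (Euc n))) hU.measurableSet
  rw [happ]
  have hdim : 0 < Module.finrank ℝ (Euc n) := by
    simpa [finrank_euclideanSpace] using (show 0 < n by omega)
  obtain ⟨V, hV, hUV⟩ := isOpen_induced_iff.1 hU
  have himg : Subtype.val '' U = V ∩ sphere (0 : Euc n) 1 := by
    rw [← hUV]
    rw [Subtype.image_preimage_coe]
    exact inter_comm _ _
  set f : Euc n → Euc n := fun x => ‖x‖⁻¹ • x with hf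
  have hfc : ContinuousOn f {(0 : Euc n)}ᶜ := by
    apply ContinuousOn.smul (f := fun x : Euc n => ‖x‖⁻¹) (g := id)
    · exact (continuousOn_id.norm).inv₀ (fun x hx => norm_ne_zero_iff.2 hx)
    · exact continuousOn_id
  set W : Set (Euc n) := ({(0:Euc n)}ᶜ ∩ f ⁻¹' V) ∩ ball 0 1 with hW
  have hWopen : IsOpen W :=
    (hfc.isOpen_inter_preimage (isOpen_compl_singleton) hV).inter isOpen_ball
  have hWsub : W ⊆ Ioo (0:ℝ) 1 • (Subtype.val '' U) := by
    rintro x ⟨⟨hx0, hxV⟩, hxb⟩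
    have hx0' : x ≠ 0 := by simpa using hx0
    have hnorm : 0 < ‖x‖ := norm_pos_iff.2 hx0'
    refine ⟨‖x‖, ?_, f x, ?_, ?_⟩
    · exact ⟨hnorm, by simpa [mem_ball_zero_iff] using hxb⟩
    · rw [himg]
      refine ⟨hxV, ?_⟩
      rw [mem_sphere_zero_iff_norm, hf]
      simp only
      rw [norm_smul, norm_inv, norm_norm, inv_mul_cancel₀ hnorm.ne']
    · rw [hf]
      simp only
      rw [smul_smul, mul_inv_cancel₀ hnorm.ne', one_smul]
  have hWne : W.Nonempty := by
    obtain ⟨x0, hx0U⟩ := hUne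
    have hx0s : ((x0 : Euc n)) ∈ V ∩ sphere (0:Euc n) 1 := by
      rw [← himg]; exact mem_image_of_mem _ hx0U
    have hx0n : ‖(x0 : Euc n)‖ = 1 := mem_sphere_zero_iff_norm.1 hx0s.2
    refine ⟨(1/2 : ℝ) • (x0 : Euc n), ⟨?_, ?_⟩, ?_⟩
    · simp only [mem_compl_iff, mem_singleton_iff]
      intro h
      apply_fun norm at h
      rw [norm_smul, hx0n, norm_zero] at h
      norm_num at h
    · have : f ((1/2 : ℝ) • (x0 : Euc n)) = (x0 : Euc n) := by
        rw [hf]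
        simp only
        rw [norm_smul, hx0n, smul_smul]
        norm_num
      rw [mem_preimage, this]
      exact hx0s.1
    · rw [mem_ball_zero_iff, norm_smul, hx0n]
      norm_num
  have hvol : 0 < volume (Ioo (0:ℝ) 1 • (Subtype.val '' U)) :=
    lt_of_lt_of_le (hWopen.measure_pos volume hWne) (measure_mono hWsub)
  exact (ENNReal.mul_pos (by exact_mod_cast hdim.ne') hvol.ne').ne'

end Aux

/-- `L_p` Brunn–Minkowski inequality for width integrals, with the equality
characterization. -/
theorem lp_width_brunn_minkowski {n : ℕ} (hn : 2 ≤ n) (i : ℕ) (hi : i < n)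
    (p : ℝ) (hp : 1 ≤ p)
    (K L : Set (Euc n)) (hK : IsConvexBody K) (hL : IsConvexBody L) :
    lpAddWidthIntegral n i p K L ^ (-p / ((n : ℝ) - i)) ≥
      widthIntegral n i K ^ (-p / ((n : ℝ) - i)) +
        widthIntegral n i L ^ (-p / ((n : ℝ) - i)) ∧
    (lpAddWidthIntegral n i p K L ^ (-p / ((n : ℝ) - i)) =
        widthIntegral n i K ^ (-p / ((n : ℝ) - i)) +
          widthIntegral n i L ^ (-p / ((n : ℝ) - i)) ↔
      SimilarWidth K L) := by
  classical
  have hp0 : (0:ℝ) < p := by linarith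
  have hq : (0:ℝ) < (n:ℝ) - i := by
    have : (i:ℝ) < (n:ℝ) := by exact_mod_cast hi
    linarith
  set q : ℝ := (n:ℝ) - i with hq_def
  set s : ℝ := q / p with hs_def
  have hs : 0 < s := div_pos hq hp0
  -- instances
  haveI : IsFiniteMeasure (sphMeasure n) := by unfold sphMeasure; infer_instance
  haveI := sphMeasure_openPos n (by omega)
  haveI : Nonempty (sphere (0:Euc n) 1) := by
    have h1 : ‖EuclideanSpace.single (⟨0, by omega⟩ : Fin n) (1:ℝ)‖ = 1 := by
      simp
    exact ⟨⟨_, by rwa [mem_sphere_zero_iff_norm]⟩⟩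
  -- bodies
  obtain ⟨hKcomp, -, hK0⟩ := id hK
  obtain ⟨hLcomp, -, hL0⟩ := id hL
  have hKne : K.Nonempty := ⟨0, interior_subset hK0⟩
  have hLne : L.Nonempty := ⟨0, interior_subset hL0⟩
  set f : sphere (0:Euc n) 1 → ℝ := fun x => halfWidth K ↑x with hfdef
  set g : sphere (0:Euc n) 1 → ℝ := fun x => halfWidth L ↑x with hgdef
  have hfc : Continuous f := (halfWidth_continuous hKcomp hKne).comp continuous_subtype_val
  have hgc : Continuous g := (halfWidth_continuous hLcomp hLne).comp continuous_subtype_val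
  have hf0 : ∀ x, 0 < f x := fun x => halfWidth_pos hK (mem_sphere_zero_iff_norm.1 x.2)
  have hg0 : ∀ x, 0 < g x := fun x => halfWidth_pos hL (mem_sphere_zero_iff_norm.1 x.2)
  set F : sphere (0:Euc n) 1 → ℝ := fun x => f x ^ (-p) with hFdef
  set G : sphere (0:Euc n) 1 → ℝ := fun x => g x ^ (-p) with hGdef
  have hFc : Continuous F := hfc.rpow_const fun x => Or.inl (hf0 x).ne'
  have hGc : Continuous G := hgc.rpow_const fun x => Or.inl (hg0 x).ne'
  have hF0 : ∀ x, 0 < F x := fun x => Real.rpow_pos_of_pos (hf0 x) _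
  have hG0 : ∀ x, 0 < G x := fun x => Real.rpow_pos_of_pos (hg0 x) _
  have R := revmink (μ := sphMeasure n) hFc hGc hF0 hG0 hs
  -- identify the integrals
  have eIF : (∫ x, F x ^ (-s) ∂(sphMeasure n))
      = ∫ x : sphere (0:Euc n) 1, halfWidth K (x : Euc n) ^ q ∂(sphMeasure n) := by
    apply integral_congr_ae (Filter.Eventually.of_forall _)
    intro x
    rw [hFdef]
    simp only
    rw [← Real.rpow_mul (hf0 x).le, show -p * -s = q by rw [hs_def]; field_simp]
  have eIG : (∫ x, G x ^ (-s) ∂(sphMeasure n))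
      = ∫ x : sphere (0:Euc n) 1, halfWidth L (x : Euc n) ^ q ∂(sphMeasure n) := by
    apply integral_congr_ae (Filter.Eventually.of_forall _)
    intro x
    rw [hGdef]
    simp only
    rw [← Real.rpow_mul (hg0 x).le, show -p * -s = q by rw [hs_def]; field_simp]
  have eIH : (∫ x, (F x + G x) ^ (-s) ∂(sphMeasure n))
      = ∫ x : sphere (0:Euc n) 1, lpAddHalfWidth p K L (x : Euc n) ^ q ∂(sphMeasure n) := by
    apply integral_congr_ae (Filter.Eventually.of_forall _)
    intro x
    have hFG : 0 < F x + G x := add_pos (hF0 x) (hG0 x)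
    show (F x + G x) ^ (-s) = ((F x + G x) ^ (-1/p)) ^ q
    rw [← Real.rpow_mul hFG.le, show -1/p * q = -s by rw [hs_def]; field_simp]
  have hIHpos : 0 < ∫ x, (F x + G x) ^ (-s) ∂(sphMeasure n) :=
    int_pos ((hFc.add hGc).rpow_const fun x => Or.inl (add_pos (hF0 x) (hG0 x)).ne')
      (fun x => Real.rpow_pos_of_pos (add_pos (hF0 x) (hG0 x)) _)
  have hIFpos : 0 < ∫ x, F x ^ (-s) ∂(sphMeasure n) :=
    int_pos (hFc.rpow_const fun x => Or.inl (hF0 x).ne')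
      (fun x => Real.rpow_pos_of_pos (hF0 x) _)
  have hIGpos : 0 < ∫ x, G x ^ (-s) ∂(sphMeasure n) :=
    int_pos (hGc.rpow_const fun x => Or.inl (hG0 x).ne')
      (fun x => Real.rpow_pos_of_pos (hG0 x) _)
  -- rewrite the goal quantities
  have hcn : (0:ℝ) < 1/(n:ℝ) := by positivity  -- n ≥ 2
  have he : -p / ((n:ℝ) - i) = -1/s := by rw [hs_def, hq_def]; field_simp
  have hA : lpAddWidthIntegral n i p K L
      = (1/(n:ℝ)) * ∫ x, (F x + G x) ^ (-s) ∂(sphMeasure n) := by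
    rw [lpAddWidthIntegral, eIH]
  have hB : widthIntegral n i K = (1/(n:ℝ)) * ∫ x, F x ^ (-s) ∂(sphMeasure n) := by
    rw [widthIntegral, eIF]
  have hC : widthIntegral n i L = (1/(n:ℝ)) * ∫ x, G x ^ (-s) ∂(sphMeasure n) := by
    rw [widthIntegral, eIG]
  rw [hA, hB, hC, he,
    Real.mul_rpow hcn.le hIHpos.le, Real.mul_rpow hcn.le hIFpos.le,
    Real.mul_rpow hcn.le hIGpos.le]
  have hcpow : 0 < (1/(n:ℝ)) ^ (-1/s) := Real.rpow_pos_of_pos hcn _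
  set c0 := (1/(n:ℝ)) ^ (-1/s) with hc0
  set AH := (∫ x, (F x + G x) ^ (-s) ∂(sphMeasure n)) ^ (-1/s) with hAH
  set BF := (∫ x, F x ^ (-s) ∂(sphMeasure n)) ^ (-1/s) with hBF
  set CG := (∫ x, G x ^ (-s) ∂(sphMeasure n)) ^ (-1/s) with hCG
  have hsim : (∃ c : ℝ, 0 < c ∧ ∀ x, G x = c * F x) ↔ SimilarWidth K L := by
    constructor
    · rintro ⟨c, hc, hGF⟩
      refine ⟨c ^ (-1/p), Real.rpow_pos_of_pos hc _, ?_⟩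
      intro u hu
      set x : sphere (0:Euc n) 1 := ⟨u, by rwa [mem_sphere_zero_iff_norm]⟩ with hx
      have h1 : g x = (G x) ^ (-1/p) := by
        rw [hGdef]
        simp only
        rw [← Real.rpow_mul (hg0 x).le, show -p * (-1/p) = 1 by field_simp, Real.rpow_one]
      have h2 : (F x) ^ (-1/p) = f x := by
        rw [hFdef]
        simp only
        rw [← Real.rpow_mul (hf0 x).le, show -p * (-1/p) = 1 by field_simp, Real.rpow_one]
      have : g x = c ^ (-1/p) * f x := by
        rw [h1, hGF x, Real.mul_rpow hc.le (hF0 x).le, h2]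
      exact this
    · rintro ⟨lam, hlam, hsim⟩
      refine ⟨lam ^ (-p), Real.rpow_pos_of_pos hlam _, ?_⟩
      intro x
      have h1 : g x = lam * f x := hsim (x : Euc n) (mem_sphere_zero_iff_norm.1 x.2)
      rw [hGdef, hFdef]
      simp only
      rw [h1, Real.mul_rpow hlam.le (hf0 x).le]
  constructor
  · have h := mul_le_mul_of_nonneg_left R.1 hcpow.le
    rw [mul_add] at h
    exact h
  · rw [← hsim, ← R.2]
    constructor
    · intro h
      have h2 : c0 * AH = c0 * (BF + CG) := by rw [mul_add]; linarith [h]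
      exact mul_left_cancel₀ hcpow.ne' h2
    · intro h
      rw [h, mul_add]

end
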